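/- Let L > 0 and [a, b] ⊆ [0, L] with a < b. For every ρ ∈ [−1, 0] and every x ∈ [0, L]: F_{a,b}(x, ρ, L) ≤ (b − a)(x + 1) + Q_{a,b}(x). -/

import Mathlib

open MeasureTheory ProbabilityTheory Real Filter Set
open scoped ENNReal NNReal

noncomputable section

/-- The standard Laplace distribution on `ℝ`, with density `t ↦ (1/2)·e^{−|t|}`. -/
def lapMeasure : Measure ℝ :=
  MeasureTheory.volume.withDensity fun t => ENNReal.ofReal ((1 / 2) * Real.exp (-|t|))

variable {Ω : Type*} [MeasurableSpace Ω]

/-- `(X i)` are i.i.d. standard Laplace random variables on the probability space `(Ω, μ)`. -/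
structure IsLaplaceWalk (μ : Measure Ω) (X : ℕ → Ω → ℝ) : Prop where
  prob : IsProbabilityMeasure μ
  meas : ∀ i, Measurable (X i)
  indep : iIndepFun X μ
  dist : ∀ i, μ.map (X i) = lapMeasure

/-- The random walk `S_k = x + X_1 + ⋯ + X_k` started at `x`. -/
def walk (x : ℝ) (X : ℕ → Ω → ℝ) (k : ℕ) (ω : Ω) : ℝ :=
  x + ∑ i ∈ Finset.range k, X i ω

/-- The exit time `τ_L = min{k : S_k ∉ [0,L]}` of the walk started at `x`. -/
def exitTime (L x : ℝ) (X : ℕ → Ω → ℝ) (ω : Ω) : ℕ :=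
  sInf {k | walk x X k ω ∉ Set.Icc 0 L}

/-- `ρ_L^*`: the smallest `ρ ≥ 0` with `cos(√ρ·L/2) − √ρ·sin(√ρ·L/2) = 0`. -/
def rhoStar (L : ℝ) : ℝ :=
  sInf {ρ : ℝ | 0 ≤ ρ ∧
    Real.cos (Real.sqrt ρ * L / 2) - Real.sqrt ρ * Real.sin (Real.sqrt ρ * L / 2) = 0}

/-- `Q_{a,b}(x) = 1 − cos(2π(x−a)/(b−a))` on `[a,b]`, and `0` elsewhere. -/
def Qfun (a b x : ℝ) : ℝ :=
  if x ∈ Set.Icc a b then 1 - Real.cos (2 * Real.pi * (x - a) / (b - a)) else 0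

/-- `F_{a,b}(x, ρ, L) = E_x[Σ_{k=0}^{τ_L−1} (1+ρ)^k Q_{a,b}(S_k)]`, written as the Lebesgue
integral of `Σ_k (1+ρ)^k Q_{a,b}(S_k) 1{S_i ∈ [0,L] ∀ i ≤ k}` (the summand vanishes for
`k ≥ τ_L`). -/
def Ffun (μ : Measure Ω) (X : ℕ → Ω → ℝ) (a b ρ L x : ℝ) : ℝ≥0∞ :=
  ∫⁻ ω, ∑' k : ℕ,
    (if ∀ i ≤ k, walk x X i ω ∈ Set.Icc 0 L
      then ENNReal.ofReal ((1 + ρ) ^ k * Qfun a b (walk x X k ω)) else 0) ∂μ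

/-!
With `u y = (b - a) * (1 + y) - ∫₀^y ∫₀^s Q`, one has `u'' = -Q`, `u 0 = u' 0 = b - a`,
and `u, u' ≥ 0` on `[0, ∞)` because `∫₀^y Q ≤ ∫ Q = b - a`. The Laplace density `e^{-|t|} / 2`
is the Green kernel of `1 - d²/dy²`, so integrating `h = Q + u = u - u''` against it over
`[0, L]` returns `u x` up to two boundary terms, one vanishing (`u 0 = u' 0`) and one
nonpositive. Hence `Q x + E[h (x + X₁); x + X₁ ∈ [0, L]] ≤ h x`, and iterating this with the
Markov property at time one (and `0 ≤ 1 + ρ ≤ 1`) bounds every partial sum of `F` by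
`h x ≤ (b - a) * (x + 1) + Q x`.
-/

namespace ProbabilityTheory

variable {β γ : Type*} [MeasurableSpace β] [MeasurableSpace γ] {μ : Measure Ω}

lemma iIndepFun.indepFun_head_tail {X : ℕ → Ω → β}
    (hX : ∀ i, Measurable (X i)) (h : iIndepFun X μ) :
    IndepFun (X 0) (fun ω i => X (i + 1) ω) μ := by
  have hST : Disjoint ({0} : Set ℕ) {i | 1 ≤ i} := by simp
  have hindep := indep_iSup_of_disjoint (fun i => (hX i).comap_le)
    ((iIndepFun_iff_iIndep _ X μ).1 h) hST
  rw [IndepFun_iff_Indep]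
  refine indep_of_indep_of_le_right (indep_of_indep_of_le_left hindep ?_) ?_
  · exact le_biSup (fun i => MeasurableSpace.comap (X i) inferInstance) rfl
  · simp only [MeasurableSpace.pi, MeasurableSpace.comap_iSup, MeasurableSpace.comap_comp]
    exact iSup_le fun i =>
      le_biSup (fun i => MeasurableSpace.comap (X i) inferInstance) (Nat.le_add_left 1 i)

lemma IndepFun.lintegral_comp [IsFiniteMeasure μ] {U : Ω → β} {V : Ω → γ}
    (hU : Measurable U) (hV : Measurable V) (h : IndepFun U V μ) {g : β × γ → ℝ≥0∞}
    (hg : Measurable g) :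
    ∫⁻ ω, g (U ω, V ω) ∂μ = ∫⁻ u, ∫⁻ ω, g (u, V ω) ∂μ ∂(μ.map U) := by
  rw [← lintegral_map (f := g) hg (hU.prodMk hV),
    (indepFun_iff_map_prod_eq_prod_map_map hU.aemeasurable hV.aemeasurable).1 h,
    lintegral_prod _ hg.aemeasurable]
  exact lintegral_congr fun u => lintegral_map (hg.comp measurable_prodMk_left) hV

end ProbabilityTheory

namespace LaplaceWalk

lemma integral_laplaceKernel_mul_sub_deriv2 {u u' u'' : ℝ → ℝ}
    (hu : ∀ y, HasDerivAt u (u' y) y) (hu' : ∀ y, HasDerivAt u' (u'' y) y)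
    (hu'' : Continuous u'') {x L : ℝ} (hx : x ∈ Icc 0 L) :
    ∫ y in 0..L, exp (-|y - x|) / 2 * (u y - u'' y) =
      u x - exp (-x) / 2 * (u 0 - u' 0) - exp (x - L) / 2 * (u L + u' L) := by
  have hcu : Continuous u := continuous_iff_continuousAt.2 fun y => (hu y).continuousAt
  have hint : ∀ (g : ℝ → ℝ), Continuous g → ∀ s t : ℝ,
      IntervalIntegrable (fun y => g y * (u y - u'' y)) volume s t :=
    fun g hg s t => (hg.mul (hcu.sub hu'')).intervalIntegrable s t
  have left : ∫ y in 0..x, exp (y - x) / 2 * (u y - u'' y) =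
      (u x - u' x) / 2 - exp (-x) / 2 * (u 0 - u' 0) := by
    rw [intervalIntegral.integral_eq_sub_of_hasDerivAt
      (f := fun y => exp (y - x) / 2 * (u y - u' y)) (fun y _ => ?_) (hint _ (by fun_prop) _ _)]
    · simp only [sub_self, exp_zero, zero_sub]
      ring
    · refine ((((hasDerivAt_id y).sub_const x).exp.div_const 2).mul
        ((hu y).sub (hu' y))).congr_deriv ?_
      simp only [id, Pi.sub_apply]
      ring
  have right : ∫ y in x..L, exp (x - y) / 2 * (u y - u'' y) =
      (u x + u' x) / 2 - exp (x - L) / 2 * (u L + u' L) := by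
    rw [intervalIntegral.integral_eq_sub_of_hasDerivAt
      (f := fun y => -(exp (x - y) / 2 * (u y + u' y))) (fun y _ => ?_) (hint _ (by fun_prop) _ _)]
    · simp only [sub_self, exp_zero]
      ring
    · refine (((((hasDerivAt_id y).const_sub x).exp.div_const 2).mul
        ((hu y).add (hu' y))).neg).congr_deriv ?_
      simp only [id, Pi.add_apply]
      ring
  have hcont : Continuous fun y => exp (-|y - x|) / 2 * (u y - u'' y) := by fun_prop
  rw [← intervalIntegral.integral_add_adjacent_intervals (b := x) (hcont.intervalIntegrable _ _)
    (hcont.intervalIntegrable _ _)]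
  rw [intervalIntegral.integral_congr (g := fun y => exp (y - x) / 2 * (u y - u'' y)),
    intervalIntegral.integral_congr (a := x) (g := fun y => exp (x - y) / 2 * (u y - u'' y)),
    left, right]
  · ring
  · intro y hy
    rw [uIcc_of_le hx.2] at hy
    simp only [abs_of_nonneg (sub_nonneg.2 hy.1), neg_sub]
  · intro y hy
    rw [uIcc_of_le hx.1] at hy
    simp only [abs_of_nonpos (sub_nonpos.2 hy.2), neg_neg]

lemma lintegral_lapMeasure_indicator_Icc {f : ℝ → ℝ} (hf : Continuous f) {L : ℝ}
    (hL : 0 ≤ L) (hf0 : ∀ y ∈ Icc 0 L, 0 ≤ f y) (x : ℝ) :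
    ∫⁻ t, (Icc 0 L).indicator (fun y => ENNReal.ofReal (f y)) (x + t) ∂lapMeasure =
      ENNReal.ofReal (∫ y in 0..L, exp (-|y - x|) / 2 * f y) := by
  have hg : Continuous fun y => exp (-|y - x|) / 2 * f y := by fun_prop
  have hmeas : Measurable ((Icc 0 L).indicator fun y => ENNReal.ofReal (f y)) :=
    hf.measurable.ennreal_ofReal.indicator measurableSet_Icc
  rw [lapMeasure, lintegral_withDensity_eq_lintegral_mul _ (by fun_prop)
    (g := fun t => (Icc 0 L).indicator (fun y => ENNReal.ofReal (f y)) (x + t))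
    (hmeas.comp (measurable_const_add x))]
  calc ∫⁻ t, ENNReal.ofReal (1 / 2 * exp (-|t|)) *
        (Icc 0 L).indicator (fun y => ENNReal.ofReal (f y)) (x + t)
      = ∫⁻ y, (Icc 0 L).indicator (fun y => ENNReal.ofReal (exp (-|y - x|) / 2 * f y)) y := by
        conv_rhs => rw [← lintegral_add_left_eq_self _ x]
        refine lintegral_congr fun t => ?_
        simp only [indicator_apply, add_sub_cancel_left]
        split_ifs
        · rw [← ENNReal.ofReal_mul (by positivity), one_div_mul_eq_div]
        · rw [mul_zero]
    _ = ENNReal.ofReal (∫ y in 0..L, exp (-|y - x|) / 2 * f y) := by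
        rw [lintegral_indicator measurableSet_Icc, ← ofReal_integral_eq_lintegral_ofReal
          (hg.continuousOn.integrableOn_Icc)
          (ae_restrict_of_forall_mem measurableSet_Icc fun y hy =>
            mul_nonneg (by positivity) (hf0 y hy)),
          integral_Icc_eq_integral_Ioc, intervalIntegral.integral_of_le hL]

section Qfun

variable {a b : ℝ}

lemma Qfun_nonneg (a b x : ℝ) : 0 ≤ Qfun a b x := by
  unfold Qfun
  split_ifs
  · linarith [Real.cos_le_one (2 * π * (x - a) / (b - a))]
  · rfl

lemma Qfun_eq_indicator (a b : ℝ) :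
    Qfun a b = (Icc a b).indicator fun x => 1 - Real.cos (2 * π * (x - a) / (b - a)) := by
  ext x
  simp only [Qfun, indicator_apply]

lemma measurable_Qfun (a b : ℝ) : Measurable (Qfun a b) := by
  rw [Qfun_eq_indicator]
  exact (by fun_prop : Measurable _).indicator measurableSet_Icc

lemma continuous_Qfun (hab : a < b) : Continuous (Qfun a b) := by
  rw [Qfun_eq_indicator, ← piecewise_eq_indicator]
  refine Continuous.piecewise (fun y hy => ?_) (by fun_prop) continuous_const
  rw [frontier_Icc hab.le] at hy
  rcases hy with rfl | rfl
  · simp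
  · rw [Pi.zero_apply, mul_div_assoc, div_self (sub_ne_zero.2 hab.ne'), mul_one, Real.cos_two_pi,
      sub_self]

lemma integral_Qfun (hab : a < b) : ∫ x, Qfun a b x = b - a := by
  have hne : b - a ≠ 0 := sub_ne_zero.2 hab.ne'
  have hderiv : ∀ t ∈ uIcc a b,
      HasDerivAt (fun t => t - (b - a) / (2 * π) * Real.sin (2 * π * (t - a) / (b - a)))
        (1 - Real.cos (2 * π * (t - a) / (b - a))) t := by
    intro t _
    have hw : HasDerivAt (fun t : ℝ => 2 * π * (t - a) / (b - a)) (2 * π / (b - a)) t := by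
      simpa using (((hasDerivAt_id t).sub_const a).const_mul (2 * π)).div_const (b - a)
    refine ((hasDerivAt_id t).sub (hw.sin.const_mul _)).congr_deriv ?_
    field_simp
  rw [Qfun_eq_indicator, integral_indicator measurableSet_Icc, integral_Icc_eq_integral_Ioc,
    ← intervalIntegral.integral_of_le hab.le,
    intervalIntegral.integral_eq_sub_of_hasDerivAt hderiv (Continuous.intervalIntegrable
      (by fun_prop) _ _), mul_div_assoc, div_self hne, mul_one, Real.sin_two_pi]
  simp

lemma integrable_Qfun (a b : ℝ) : Integrable (Qfun a b) := by
  rw [Qfun_eq_indicator, integrable_indicator_iff measurableSet_Icc]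
  exact (Continuous.continuousOn (by fun_prop)).integrableOn_Icc

def qInt (a b y : ℝ) : ℝ := ∫ t in 0..y, Qfun a b t

def potential (a b y : ℝ) : ℝ := (b - a) * (1 + y) - ∫ t in 0..y, qInt a b t

def supersolution (a b y : ℝ) : ℝ := Qfun a b y + potential a b y

lemma hasDerivAt_qInt (hab : a < b) (y : ℝ) : HasDerivAt (qInt a b) (Qfun a b y) y :=
  ((continuous_Qfun hab).integral_hasStrictDerivAt 0 y).hasDerivAt

lemma continuous_qInt (hab : a < b) : Continuous (qInt a b) :=
  continuous_iff_continuousAt.2 fun y => (hasDerivAt_qInt hab y).continuousAt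

lemma hasDerivAt_potential (hab : a < b) (y : ℝ) :
    HasDerivAt (potential a b) (b - a - qInt a b y) y :=
  ((((hasDerivAt_id y).const_add 1).const_mul (b - a)).sub
    ((continuous_qInt hab).integral_hasStrictDerivAt 0 y).hasDerivAt).congr_deriv (by simp)

lemma qInt_nonneg {y : ℝ} (hy : 0 ≤ y) : 0 ≤ qInt a b y :=
  intervalIntegral.integral_nonneg hy fun t _ => Qfun_nonneg a b t

lemma qInt_le (hab : a < b) {y : ℝ} (hy : 0 ≤ y) : qInt a b y ≤ b - a := by
  rw [qInt, intervalIntegral.integral_of_le hy, ← integral_Qfun hab]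
  exact setIntegral_le_integral (integrable_Qfun a b) (.of_forall (Qfun_nonneg a b))

lemma sub_le_potential (hab : a < b) {y : ℝ} (hy : 0 ≤ y) : b - a ≤ potential a b y := by
  have : ∫ t in 0..y, qInt a b t ≤ ∫ _ in 0..y, (b - a) :=
    intervalIntegral.integral_mono_on hy ((continuous_qInt hab).intervalIntegrable _ _)
      intervalIntegrable_const fun t ht => qInt_le hab ht.1
  rw [intervalIntegral.integral_const, smul_eq_mul] at this
  rw [potential]
  linarith

lemma potential_nonneg (hab : a < b) {y : ℝ} (hy : 0 ≤ y) : 0 ≤ potential a b y :=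
  (sub_nonneg.2 hab.le).trans (sub_le_potential hab hy)

lemma potential_le {y : ℝ} (hy : 0 ≤ y) : potential a b y ≤ (b - a) * (1 + y) :=
  sub_le_self _ (intervalIntegral.integral_nonneg hy fun _ ht => qInt_nonneg ht.1)

lemma continuous_supersolution (hab : a < b) : Continuous (supersolution a b) :=
  (continuous_Qfun hab).add
    (continuous_iff_continuousAt.2 fun y => (hasDerivAt_potential hab y).continuousAt)

lemma supersolution_nonneg (hab : a < b) {y : ℝ} (hy : 0 ≤ y) : 0 ≤ supersolution a b y :=
  add_nonneg (Qfun_nonneg a b y) (potential_nonneg hab hy)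

lemma integral_laplaceKernel_mul_supersolution_le (hab : a < b) {x L : ℝ} (hx : x ∈ Icc 0 L) :
    ∫ y in 0..L, exp (-|y - x|) / 2 * supersolution a b y ≤ potential a b x := by
  have hL : 0 ≤ L := hx.1.trans hx.2
  have key := integral_laplaceKernel_mul_sub_deriv2 (hasDerivAt_potential hab)
    (fun y => ((hasDerivAt_qInt hab y).const_sub (b - a))) (continuous_Qfun hab).neg hx
  have hq0 : qInt a b 0 = 0 := intervalIntegral.integral_same
  have hu0 : potential a b 0 = b - a := by simp [potential]
  simp only [hq0, sub_zero, hu0, sub_self, mul_zero, sub_neg_eq_add] at key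
  have hboundary : 0 ≤ potential a b L + (b - a - qInt a b L) :=
    add_nonneg (potential_nonneg hab hL) (sub_nonneg.2 (qInt_le hab hL))
  simp only [supersolution, add_comm (Qfun a b _)]
  rw [key]
  exact sub_le_self _ (mul_nonneg (by positivity) hboundary)

end Qfun

section Walk

-- `killedTerm a b L (1 + ρ) x k (fun i => X i ω)` is definitionally the `k`-th summand of `Ffun`.
def killedTerm (a b L c x : ℝ) (k : ℕ) (s : ℕ → ℝ) : ℝ≥0∞ :=
  if ∀ i ≤ k, x + ∑ j ∈ Finset.range i, s j ∈ Icc 0 L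
    then ENNReal.ofReal (c ^ k * Qfun a b (x + ∑ j ∈ Finset.range k, s j)) else 0

variable {a b L c x : ℝ}

lemma killedTerm_of_notMem (hx : x ∉ Icc 0 L) (k : ℕ) (s : ℕ → ℝ) :
    killedTerm a b L c x k s = 0 :=
  if_neg fun h => hx (by simpa using h 0 k.zero_le)

lemma killedTerm_zero (hx : x ∈ Icc 0 L) (s : ℕ → ℝ) :
    killedTerm a b L c x 0 s = ENNReal.ofReal (Qfun a b x) := by
  rw [killedTerm, if_pos fun i hi => by simpa [Nat.le_zero.1 hi] using hx]
  simp

lemma killedTerm_succ (hc : 0 ≤ c) (hx : x ∈ Icc 0 L) (k : ℕ) (s : ℕ → ℝ) :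
    killedTerm a b L c x (k + 1) s =
      ENNReal.ofReal c * killedTerm a b L c (x + s 0) k (fun j => s (j + 1)) := by
  have hshift : ∀ i, x + ∑ j ∈ Finset.range (i + 1), s j =
      x + s 0 + ∑ j ∈ Finset.range i, s (j + 1) := fun i => by
    rw [Finset.sum_range_succ']
    ring
  have hcond : (∀ i ≤ k + 1, x + ∑ j ∈ Finset.range i, s j ∈ Icc 0 L) ↔
      ∀ i ≤ k, x + s 0 + ∑ j ∈ Finset.range i, s (j + 1) ∈ Icc 0 L := by
    refine ⟨fun h i hi => hshift i ▸ h (i + 1) (by omega), fun h i hi => ?_⟩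
    rcases i with _ | i
    · simpa using hx
    · exact hshift i ▸ h i (by omega)
  simp only [killedTerm, hcond, hshift]
  split_ifs
  · rw [← ENNReal.ofReal_mul hc, pow_succ', mul_assoc]
  · rw [mul_zero]

lemma measurable_killedTerm (k : ℕ) :
    Measurable fun p : ℝ × (ℕ → ℝ) => killedTerm a b L c p.1 k p.2 := by
  have hwalk : ∀ i, Measurable fun p : ℝ × (ℕ → ℝ) => p.1 + ∑ j ∈ Finset.range i, p.2 j :=
    fun i => by fun_prop
  refine .ite ?_ (((measurable_Qfun a b).comp (hwalk k)).const_mul _).ennreal_ofReal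
    measurable_const
  simp only [ofPred_forall]
  exact .iInter fun i => .iInter fun _ => hwalk i measurableSet_Icc

variable {μ : Measure Ω}

lemma _root_.IsLaplaceWalk.tail {X : ℕ → Ω → ℝ} (h : IsLaplaceWalk μ X) :
    IsLaplaceWalk μ fun i => X (i + 1) :=
  ⟨h.prob, fun i => h.meas (i + 1), h.indep.precomp Nat.succ_injective, fun i => h.dist (i + 1)⟩

theorem lintegral_sum_killedTerm_le (hab : a < b) (hc0 : 0 ≤ c) (hc1 : c ≤ 1) (n : ℕ) :
    ∀ {X : ℕ → Ω → ℝ}, IsLaplaceWalk μ X → ∀ x ∈ Icc 0 L,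
      ∫⁻ ω, ∑ k ∈ Finset.range n, killedTerm a b L c x k (fun i => X i ω) ∂μ ≤
        ENNReal.ofReal (supersolution a b x) := by
  induction n with
  | zero => simp
  | succ n ih =>
    intro X h x hx
    have := h.prob
    let G : ℝ × (ℕ → ℝ) → ℝ≥0∞ := fun p =>
      ∑ k ∈ Finset.range n, killedTerm a b L c (x + p.1) k p.2
    have hG : Measurable G := Finset.measurable_sum _ fun k _ =>
      (measurable_killedTerm k).comp ((measurable_fst.const_add x).prodMk measurable_snd)
    have htail : Measurable fun ω i => X (i + 1) ω := measurable_pi_lambda _ fun i => h.meas _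
    have hGX : Measurable fun ω => G (X 0 ω, fun i => X (i + 1) ω) :=
      hG.comp ((h.meas 0).prodMk htail)
    have hfirst_step : ∀ ω,
        ∑ k ∈ Finset.range (n + 1), killedTerm a b L c x k (fun i => X i ω) =
          ENNReal.ofReal (Qfun a b x) + ENNReal.ofReal c * G (X 0 ω, fun i => X (i + 1) ω) := by
      intro ω
      rw [Finset.sum_range_succ', killedTerm_zero hx, Finset.mul_sum, add_comm]
      simp only [killedTerm_succ hc0 hx]
    have hmarkov : ∫⁻ ω, G (X 0 ω, fun i => X (i + 1) ω) ∂μ ≤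
        ∫⁻ t, (Icc 0 L).indicator (fun y => ENNReal.ofReal (supersolution a b y)) (x + t)
          ∂lapMeasure := by
      rw [(h.indep.indepFun_head_tail h.meas).lintegral_comp (h.meas 0) htail hG, h.dist 0]
      refine lintegral_mono fun t => ?_
      by_cases ht : x + t ∈ Icc 0 L
      · rw [indicator_of_mem ht]
        exact ih h.tail (x + t) ht
      · simp [G, indicator_of_notMem ht, killedTerm_of_notMem ht]
    have hL : 0 ≤ L := hx.1.trans hx.2
    calc ∫⁻ ω, ∑ k ∈ Finset.range (n + 1), killedTerm a b L c x k (fun i => X i ω) ∂μ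
        = ENNReal.ofReal (Qfun a b x) +
            ENNReal.ofReal c * ∫⁻ ω, G (X 0 ω, fun i => X (i + 1) ω) ∂μ := by
          simp_rw [hfirst_step]
          rw [lintegral_add_left measurable_const, lintegral_const, measure_univ, mul_one,
            lintegral_const_mul _ hGX]
      _ ≤ ENNReal.ofReal (Qfun a b x) +
            ENNReal.ofReal (∫ y in 0..L, exp (-|y - x|) / 2 * supersolution a b y) := by
          rw [← lintegral_lapMeasure_indicator_Icc (continuous_supersolution hab) hL
            fun y hy => supersolution_nonneg hab hy.1]
          gcongr
          exact (mul_le_of_le_one_left' (ENNReal.ofReal_le_one.2 hc1)).trans hmarkov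
      _ ≤ ENNReal.ofReal (Qfun a b x) + ENNReal.ofReal (potential a b x) := by
          gcongr
          exact integral_laplaceKernel_mul_supersolution_le hab hx
      _ = ENNReal.ofReal (supersolution a b x) :=
          (ENNReal.ofReal_add (Qfun_nonneg a b x) (potential_nonneg hab hx.1)).symm

end Walk

end LaplaceWalk

open LaplaceWalk in
theorem Ffun_upper_nonpos_general (μ : Measure Ω) (X : ℕ → Ω → ℝ) (h : IsLaplaceWalk μ X)
    (L a b : ℝ) (hab : a < b) (ρ : ℝ) (hρ : ρ ∈ Set.Icc (-1 : ℝ) 0)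
    (x : ℝ) (hx : x ∈ Set.Icc (0 : ℝ) L) :
    Ffun μ X a b ρ L x ≤ ENNReal.ofReal ((b - a) * (x + 1) + Qfun a b x) := by
  have hmeas (k : ℕ) : Measurable fun ω => killedTerm a b L (1 + ρ) x k (fun i => X i ω) :=
    (measurable_killedTerm k).comp (measurable_const.prodMk (measurable_pi_lambda _ h.meas))
  calc Ffun μ X a b ρ L x = ∑' k, ∫⁻ ω, killedTerm a b L (1 + ρ) x k (fun i => X i ω) ∂μ :=
        lintegral_tsum fun k => (hmeas k).aemeasurable
    _ ≤ ENNReal.ofReal (supersolution a b x) := ENNReal.tsum_le_of_sum_range_le fun n => by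
        rw [← lintegral_finsetSum _ fun k _ => hmeas k]
        exact lintegral_sum_killedTerm_le hab (by linarith [hρ.1]) (by linarith [hρ.2]) n h x
          hx
    _ ≤ ENNReal.ofReal ((b - a) * (x + 1) + Qfun a b x) := by
        have := potential_le (a := a) (b := b) hx.1
        gcongr
        rw [supersolution]
        linarith

/-- for `ρ ∈ [−1, 0]` and `x ∈ [0,L]`,
`F_{a,b}(x, ρ, L) ≤ (b − a)(x + 1) + Q_{a,b}(x)`. -/
theorem Ffun_upper_nonpos (μ : Measure Ω) (X : ℕ → Ω → ℝ) (h : IsLaplaceWalk μ X)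
    (L a b : ℝ) (hL : 0 < L) (hab : a < b)
    (hsub : Set.Icc a b ⊆ Set.Icc 0 L) (ρ : ℝ) (hρ : ρ ∈ Set.Icc (-1 : ℝ) 0)
    (x : ℝ) (hx : x ∈ Set.Icc (0 : ℝ) L) :
    Ffun μ X a b ρ L x ≤ ENNReal.ofReal ((b - a) * (x + 1) + Qfun a b x) :=
  Ffun_upper_nonpos_general μ X h L a b hab ρ hρ x hx
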